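/- arXiv:2211.13739 — 3 statements merged into one kernel-verified Lean document; each statement's English description precedes it below -/
import Mathlib

section
/- Let s ∈ (0,1), r ∈ [0,2], λ₁ > 0 and λ ≥ λ₁. For every complex z with |Im z| ≤ π/2: (i) if Re z ≥ 0 then |λ^{r/2} e^{(1−s)z}/(e^z + λ)| ≤ e^{−(s − r/2) Re z}, and (ii) if Re z ≤ 0 then |λ^{r/2} e^{(1−s)z}/(e^z + λ)| ≤ λ₁^{r/2 − 1} e^{(1−s) Re z}. -/
/-! On the strip `|Im z| ≤ π/2` the term `e^z` has nonnegative real part, so adding `λ > 0` can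
only increase its modulus: `|e^z + λ| ≥ max (e^{Re z}, λ)`. For `Re z ≥ 0` the denominator is
bounded below by the weighted geometric mean `λ^{r/2} e^{(1 - r/2) Re z}` of these two bounds,
and for `Re z ≤ 0` simply by `λ`, after which `λ^{r/2 - 1} ≤ λ₁^{r/2 - 1}` since `r ≤ 2`. -/

open Complex

namespace Complex

lemma re_exp_nonneg_of_abs_im_le {z : ℂ} (hz : |z.im| ≤ Real.pi / 2) : 0 ≤ (exp z).re := by
  have hcos : 0 ≤ Real.cos z.im := Real.cos_nonneg_of_mem_Icc (abs_le.mp hz)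
  rw [exp_re]
  positivity

lemma le_norm_add_ofReal_of_re_nonneg {w : ℂ} (hw : 0 ≤ w.re) (a : ℝ) : a ≤ ‖w + a‖ :=
  calc a ≤ (w + a).re := by simp [hw]
    _ ≤ ‖w + a‖ := re_le_norm _

lemma norm_le_norm_add_ofReal_of_re_nonneg {w : ℂ} (hw : 0 ≤ w.re) {a : ℝ} (ha : 0 ≤ a) :
    ‖w‖ ≤ ‖w + a‖ := by
  have hsq : ‖w‖ ^ 2 ≤ ‖w + a‖ ^ 2 := by
    rw [Complex.sq_norm, Complex.sq_norm, normSq_add]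
    simp only [normSq_ofReal, conj_ofReal, re_mul_ofReal]
    nlinarith
  exact (pow_le_pow_iff_left₀ (norm_nonneg _) (norm_nonneg _) two_ne_zero).mp hsq

lemma norm_ofReal_mul_exp_div {c : ℝ} (hc : 0 ≤ c) (a : ℝ) (z w : ℂ) :
    ‖(c : ℂ) * exp (a * z) / w‖ = c * Real.exp (a * z.re) / ‖w‖ := by
  rw [norm_div, norm_mul, norm_real, Real.norm_of_nonneg hc, norm_exp, re_ofReal_mul]

end Complex

lemma Real.rpow_mul_rpow_one_sub_le {a b M t : ℝ} (ha : 0 ≤ a) (hb : 0 ≤ b) (haM : a ≤ M)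
    (hbM : b ≤ M) (ht0 : 0 ≤ t) (ht1 : t ≤ 1) : a ^ t * b ^ (1 - t) ≤ M :=
  calc a ^ t * b ^ (1 - t) ≤ t * a + (1 - t) * b :=
        geom_mean_le_arith_mean2_weighted ht0 (by linarith) ha hb (by ring)
    _ ≤ t * M + (1 - t) * M := by gcongr
    _ = M := by ring

lemma Real.rpow_div_le_rpow_sub_one {lam1 lam M t : ℝ} (hlam1 : 0 < lam1) (hlam : lam1 ≤ lam)
    (hM : lam ≤ M) (ht : t ≤ 1) : lam ^ t / M ≤ lam1 ^ (t - 1) := by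
  have hlam0 : 0 < lam := hlam1.trans_le hlam
  calc lam ^ t / M ≤ lam ^ t / lam := by gcongr
    _ = lam ^ (t - 1) := by rw [rpow_sub hlam0, rpow_one]
    _ ≤ lam1 ^ (t - 1) := rpow_le_rpow_of_nonpos hlam1 hlam (by linarith)

theorem sinc_integrand_decay_general (s : ℝ)
    (r : ℝ) (hr : r ∈ Set.Icc (0 : ℝ) 2)
    (lam1 : ℝ) (hlam1 : 0 < lam1) (lam : ℝ) (hlam : lam1 ≤ lam)
    (z : ℂ) (hz : |z.im| ≤ Real.pi / 2) :
    (0 ≤ z.re →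
      ‖((lam ^ (r / 2) : ℝ) * Complex.exp ((1 - (s : ℂ)) * z) /
          (Complex.exp z + (lam : ℂ)))‖ ≤ Real.exp (-(s - r / 2) * z.re)) ∧
    (z.re ≤ 0 →
      ‖((lam ^ (r / 2) : ℝ) * Complex.exp ((1 - (s : ℂ)) * z) /
          (Complex.exp z + (lam : ℂ)))‖ ≤ lam1 ^ (r / 2 - 1) * Real.exp ((1 - s) * z.re)) := by
  obtain ⟨hr0, hr2⟩ := hr
  have hlam0 : 0 < lam := hlam1.trans_le hlam
  have hre := re_exp_nonneg_of_abs_im_le hz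
  set M := ‖exp z + lam‖
  have hM_lam : lam ≤ M := le_norm_add_ofReal_of_re_nonneg hre lam
  have hM_exp : Real.exp z.re ≤ M := by
    simpa only [norm_exp] using norm_le_norm_add_ofReal_of_re_nonneg hre hlam0.le
  have hM : 0 < M := hlam0.trans_le hM_lam
  have hcast : (1 - (s : ℂ)) = ((1 - s : ℝ) : ℂ) := by push_cast; rfl
  rw [hcast, norm_ofReal_mul_exp_div (by positivity)]
  refine ⟨fun _ => ?_, fun _ => ?_⟩
  · have hden : lam ^ (r / 2) * Real.exp z.re ^ (1 - r / 2) ≤ M :=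
      Real.rpow_mul_rpow_one_sub_le hlam0.le (Real.exp_pos _).le hM_lam hM_exp
        (by linarith) (by linarith)
    rw [div_le_iff₀ hM]
    calc lam ^ (r / 2) * Real.exp ((1 - s) * z.re)
        = Real.exp (-(s - r / 2) * z.re) * (lam ^ (r / 2) * Real.exp z.re ^ (1 - r / 2)) := by
          rw [← Real.exp_mul, mul_left_comm, ← Real.exp_add]; ring_nf
      _ ≤ Real.exp (-(s - r / 2) * z.re) * M := by gcongr
  · rw [mul_div_right_comm]
    gcongr
    exact Real.rpow_div_le_rpow_sub_one hlam1 hlam hM_lam (by linarith)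

theorem sinc_integrand_decay (s : ℝ) (hs : s ∈ Set.Ioo (0 : ℝ) 1)
    (r : ℝ) (hr : r ∈ Set.Icc (0 : ℝ) 2)
    (lam1 : ℝ) (hlam1 : 0 < lam1) (lam : ℝ) (hlam : lam1 ≤ lam)
    (z : ℂ) (hz : |z.im| ≤ Real.pi / 2) :
    (0 ≤ z.re →
      ‖((lam ^ (r / 2) : ℝ) * Complex.exp ((1 - (s : ℂ)) * z) /
          (Complex.exp z + (lam : ℂ)))‖ ≤ Real.exp (-(s - r / 2) * z.re)) ∧
    (z.re ≤ 0 →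
      ‖((lam ^ (r / 2) : ℝ) * Complex.exp ((1 - (s : ℂ)) * z) /
          (Complex.exp z + (lam : ℂ)))‖ ≤ lam1 ^ (r / 2 - 1) * Real.exp ((1 - s) * z.re)) :=
  sinc_integrand_decay_general s r hr lam1 hlam1 lam hlam z hz
end

section
/- Let s ∈ (0,1) and k > 0. For s ∈ (0,1), k > 0, and nonnegative integers 𝙼, 𝙽, define the sinc quadrature Q_k^{-s}(λ) := (k·sin(πs)/π) · ∑_{l=−𝙼}^{𝙽} e^{(1−s)kl}/(e^{kl} + λ) for λ > 0. Then for every λ > 0 and all nonnegative integers 𝙼, 𝙽, one has Q_k^{-s}(λ) ≤ (1 + 2k·sin(πs)/π) · λ^{−s}. -/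
/-!
The sum is `1/k` times a Riemann sum, with step `k`, of the Balakrishnan integrand
`e^{(1-s)y} / (e^y + λ)`, whose integral over `ℝ` is `(π / sin πs) λ^{-s}`. The integrand is
bounded by `λ^{-s}` and unimodal, increasing up to `log ((1-s) λ / s)` and decreasing after it.
For a unimodal function every sample except the two next to the peak is dominated by the
integral over an adjacent unit interval, so the sum is at most the integral plus twice the
maximum. The substitution `x = e^y / (e^y + λ)` turns the integral into
`λ^{-s} B(1-s, s) = λ^{-s} Γ(1-s) Γ(s)`.
-/

open Real MeasureTheory intervalIntegral Set

lemma sum_Ico_int_eq_sum_range {M : Type*} [AddCommMonoid M] (f : ℤ → M) (a : ℤ) (n : ℕ) :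
    ∑ l ∈ Finset.Ico a (a + n), f l = ∑ i ∈ Finset.range n, f (a + i) := by
  induction n with
  | zero => simp
  | succ n ih =>
    rw [Finset.sum_range_succ, ← ih, Nat.cast_succ, ← add_assoc,
      ← Finset.insert_Ico_right_eq_Ico_add_one (by omega), Finset.sum_insert (by simp), add_comm]

theorem MonotoneOn.sum_Ico_int_le_integral {f : ℝ → ℝ} {a b : ℤ} (hab : a ≤ b)
    (hf : MonotoneOn f (Icc a b)) : ∑ l ∈ Finset.Ico a b, f l ≤ ∫ x in a..b, f x := by
  obtain ⟨n, rfl⟩ := Int.le.dest hab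
  rw [sum_Ico_int_eq_sum_range]
  push_cast at hf ⊢
  exact hf.sum_le_integral

theorem AntitoneOn.sum_Ioc_int_le_integral {f : ℝ → ℝ} {a b : ℤ} (hab : a ≤ b)
    (hf : AntitoneOn f (Icc a b)) : ∑ l ∈ Finset.Ioc a b, f l ≤ ∫ x in a..b, f x := by
  obtain ⟨n, rfl⟩ := Int.le.dest hab
  rw [← Finset.Ico_add_one_add_one_eq_Ioc, add_right_comm, sum_Ico_int_eq_sum_range]
  push_cast at hf ⊢
  convert hf.sum_le_integral using 3 with i
  push_cast
  ring

theorem sum_Icc_int_le_of_unimodal {φ : ℝ → ℝ} (hφ : Continuous φ) (h0 : ∀ t, 0 ≤ φ t)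
    {t₀ C I : ℝ} (hmono : MonotoneOn φ (Iic t₀)) (hanti : AntitoneOn φ (Ici t₀))
    (hC : ∀ t, φ t ≤ C) (hI : ∀ a b, a ≤ b → ∫ x in a..b, φ x ≤ I) (m n : ℤ) :
    ∑ l ∈ Finset.Icc m n, φ l ≤ I + 2 * C := by
  set c := ⌊t₀⌋
  set a := min m c
  set b := max n (c + 1)
  have hc : (c : ℝ) ≤ t₀ := Int.floor_le t₀
  have hc' : t₀ ≤ c + 1 := (Int.lt_floor_add_one t₀).le
  have hac : (a : ℝ) ≤ c := by exact_mod_cast min_le_right m c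
  have hcb : (c : ℝ) + 1 ≤ b := by exact_mod_cast le_max_right n (c + 1)
  have hleft : ∑ l ∈ Finset.Ico a c, φ l ≤ ∫ x in a..c, φ x :=
    (hmono.mono fun x hx => hx.2.trans hc).sum_Ico_int_le_integral (min_le_right m c)
  have hmid : ∑ l ∈ Finset.Icc c (c + 1), φ l ≤ 2 * C := by
    have hcard : (Finset.Icc c (c + 1)).card = 2 := by rw [Int.card_Icc]; omega
    have := Finset.sum_le_card_nsmul (Finset.Icc c (c + 1)) (fun l : ℤ => φ l) C fun l _ => hC l
    rwa [hcard, two_nsmul, ← two_mul] at this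
  have hright : ∑ l ∈ Finset.Ioc (c + 1) b, φ l ≤ ∫ x in (c + 1 : ℝ)..b, φ x := by
    have := (hanti.mono fun x hx => ?_).sum_Ioc_int_le_integral (le_max_right n (c + 1))
    · simpa only [Int.cast_add, Int.cast_one] using this
    · exact hc'.trans (by simpa using hx.1)
  have hint : (∫ x in a..c, φ x) + ∫ x in (c + 1 : ℝ)..b, φ x ≤ I := by
    have hmid_nonneg : 0 ≤ ∫ x in (c : ℝ)..c + 1, φ x :=
      integral_nonneg (by linarith) fun x _ => h0 x
    have hφi : ∀ a b : ℝ, IntervalIntegrable φ volume a b := hφ.intervalIntegrable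
    have hac' := integral_add_adjacent_intervals (hφi a c) (hφi c (c + 1))
    have hab := integral_add_adjacent_intervals (hφi a (c + 1)) (hφi (c + 1) b)
    linarith [hI a b (by linarith)]
  have hsplit : Finset.Icc a b = Finset.Ico a c ∪ (Finset.Icc c (c + 1) ∪ Finset.Ioc (c + 1) b) := by
    ext; simp only [Finset.mem_Icc, Finset.mem_Ico, Finset.mem_Ioc, Finset.mem_union]; omega
  calc ∑ l ∈ Finset.Icc m n, φ l ≤ ∑ l ∈ Finset.Icc a b, φ l :=
        Finset.sum_le_sum_of_subset_of_nonneg (Finset.Icc_subset_Icc (min_le_left _ _)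
          (le_max_left _ _)) fun _ _ _ => h0 _
    _ = ∑ l ∈ Finset.Ico a c, φ l +
          (∑ l ∈ Finset.Icc c (c + 1), φ l + ∑ l ∈ Finset.Ioc (c + 1) b, φ l) := by
        rw [hsplit, Finset.sum_union, Finset.sum_union] <;>
          exact Finset.disjoint_left.2 fun x hx hy => by simp at hx hy; omega
    _ ≤ I + 2 * C := by linarith

lemma cpow_mul_one_sub_cpow_ofReal (α β : ℝ) {x : ℝ} (hx : x ∈ Icc (0 : ℝ) 1) :
    (x : ℂ) ^ ((α : ℂ) - 1) * (1 - (x : ℂ)) ^ ((β : ℂ) - 1)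
      = ((x ^ (α - 1) * (1 - x) ^ (β - 1) : ℝ) : ℂ) := by
  push_cast
  rw [Complex.ofReal_cpow hx.1, Complex.ofReal_cpow (sub_nonneg.2 hx.2)]
  push_cast
  ring

lemma betaIntegral_ofReal (α β : ℝ) :
    Complex.betaIntegral α β = ((∫ x in (0 : ℝ)..1, x ^ (α - 1) * (1 - x) ^ (β - 1) : ℝ) : ℂ) := by
  rw [Complex.betaIntegral, ← intervalIntegral.integral_ofReal]
  exact integral_congr fun x hx => cpow_mul_one_sub_cpow_ofReal α β (by simpa using hx)

lemma intervalIntegrable_rpow_mul_one_sub_rpow {α β : ℝ} (hα : 0 < α) (hβ : 0 < β) :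
    IntervalIntegrable (fun x : ℝ => x ^ (α - 1) * (1 - x) ^ (β - 1)) volume 0 1 := by
  have h := Complex.betaIntegral_convergent (u := α) (v := β) (by simpa) (by simpa)
  rw [intervalIntegrable_iff_integrableOn_Ioc_of_le zero_le_one] at h ⊢
  refine IntegrableOn.congr_fun h.re (fun x hx => ?_) measurableSet_Ioc
  rw [cpow_mul_one_sub_cpow_ofReal α β (Ioc_subset_Icc_self hx)]
  exact Complex.ofReal_re _

lemma integral_rpow_neg_mul_one_sub_rpow {s : ℝ} (hs : s ∈ Ioo (0 : ℝ) 1) :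
    ∫ x in (0 : ℝ)..1, x ^ (-s) * (1 - x) ^ (s - 1) = π / sin (π * s) := by
  have h := ProbabilityTheory.beta_eq_betaIntegralReal (1 - s) s (by linarith [hs.2]) hs.1
  rw [betaIntegral_ofReal, Complex.ofReal_re, sub_sub_cancel_left] at h
  rw [← h, ProbabilityTheory.beta, sub_add_cancel, Real.Gamma_one, div_one, mul_comm,
    Real.Gamma_mul_Gamma_one_sub]

noncomputable def balakrishnanIntegrand (s lam y : ℝ) : ℝ := exp ((1 - s) * y) / (exp y + lam)

noncomputable def balakrishnanPeak (s lam : ℝ) : ℝ := log ((1 - s) * lam / s)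

section balakrishnanIntegrand

variable {s lam : ℝ}

lemma balakrishnanIntegrand_nonneg (hlam : 0 ≤ lam) (y : ℝ) : 0 ≤ balakrishnanIntegrand s lam y := by
  unfold balakrishnanIntegrand; positivity

lemma continuous_balakrishnanIntegrand (hlam : 0 ≤ lam) : Continuous (balakrishnanIntegrand s lam) :=
  Continuous.div (by fun_prop) (by fun_prop) fun y => by positivity

lemma balakrishnanIntegrand_eq_rpow (y : ℝ) :
    balakrishnanIntegrand s lam y = exp y ^ (1 - s) / (exp y + lam) := by
  rw [balakrishnanIntegrand, ← exp_mul, mul_comm]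

lemma balakrishnanIntegrand_le_rpow (hs0 : 0 ≤ s) (hs1 : s ≤ 1) (hlam : 0 < lam) (y : ℝ) :
    balakrishnanIntegrand s lam y ≤ lam ^ (-s) := by
  set m := max (exp y) lam
  have hm : 0 < m := lt_max_of_lt_right hlam
  calc balakrishnanIntegrand s lam y = exp y ^ (1 - s) / (exp y + lam) :=
        balakrishnanIntegrand_eq_rpow y
    _ ≤ m ^ (1 - s) / m := by
        gcongr
        · exact le_max_left _ _
        · exact max_le (by linarith) (by linarith [exp_pos y])
    _ = m ^ (-s) := by rw [← rpow_sub_one hm.ne', sub_sub_cancel_left]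
    _ ≤ lam ^ (-s) := rpow_le_rpow_of_nonpos hlam (le_max_right _ _) (by linarith)

lemma hasDerivAt_balakrishnanIntegrand (hlam : 0 ≤ lam) (y : ℝ) :
    HasDerivAt (balakrishnanIntegrand s lam)
      (exp ((1 - s) * y) * ((1 - s) * lam - s * exp y) / (exp y + lam) ^ 2) y := by
  have hnum : HasDerivAt (fun y => exp ((1 - s) * y)) (exp ((1 - s) * y) * (1 - s)) y := by
    simpa using ((hasDerivAt_id y).const_mul (1 - s)).exp
  exact (hnum.div ((hasDerivAt_exp y).add_const lam) (by positivity)).congr_deriv (by ring)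

lemma exp_balakrishnanPeak (hs0 : 0 < s) (hs1 : s < 1) (hlam : 0 < lam) :
    exp (balakrishnanPeak s lam) = (1 - s) * lam / s :=
  exp_log (div_pos (mul_pos (by linarith) hlam) hs0)

lemma monotoneOn_balakrishnanIntegrand (hs0 : 0 < s) (hs1 : s < 1) (hlam : 0 < lam) :
    MonotoneOn (balakrishnanIntegrand s lam) (Iic (balakrishnanPeak s lam)) := by
  refine monotoneOn_of_deriv_nonneg (convex_Iic _)
    (continuous_balakrishnanIntegrand hlam.le).continuousOn
    (fun y _ => (hasDerivAt_balakrishnanIntegrand hlam.le y).differentiableAt.differentiableWithinAt)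
    fun y hy => ?_
  rw [interior_Iic] at hy
  have hy' : exp y ≤ (1 - s) * lam / s :=
    exp_balakrishnanPeak hs0 hs1 hlam ▸ exp_le_exp.2 hy.le
  rw [(hasDerivAt_balakrishnanIntegrand hlam.le y).deriv]
  have : 0 ≤ (1 - s) * lam - s * exp y := by rw [le_div_iff₀ hs0] at hy'; linarith
  positivity

lemma antitoneOn_balakrishnanIntegrand (hs0 : 0 < s) (hs1 : s < 1) (hlam : 0 < lam) :
    AntitoneOn (balakrishnanIntegrand s lam) (Ici (balakrishnanPeak s lam)) := by
  refine antitoneOn_of_deriv_nonpos (convex_Ici _)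
    (continuous_balakrishnanIntegrand hlam.le).continuousOn
    (fun y _ => (hasDerivAt_balakrishnanIntegrand hlam.le y).differentiableAt.differentiableWithinAt)
    fun y hy => ?_
  rw [interior_Ici] at hy
  have hy' : (1 - s) * lam / s ≤ exp y :=
    exp_balakrishnanPeak hs0 hs1 hlam ▸ exp_le_exp.2 hy.le
  rw [(hasDerivAt_balakrishnanIntegrand hlam.le y).deriv]
  have : (1 - s) * lam - s * exp y ≤ 0 := by rw [div_le_iff₀ hs0] at hy'; linarith
  exact div_nonpos_of_nonpos_of_nonneg (mul_nonpos_of_nonneg_of_nonpos (exp_pos _).le this)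
    (by positivity)

lemma balakrishnanIntegrand_eq_beta_substitution (hlam : 0 < lam) (y : ℝ) :
    balakrishnanIntegrand s lam y = lam ^ (-s) *
      ((exp y / (exp y + lam)) ^ (-s) * (1 - exp y / (exp y + lam)) ^ (s - 1) *
        (lam * exp y / (exp y + lam) ^ 2)) := by
  have hE := exp_pos y
  have hD : 0 < exp y + lam := by positivity
  have hu : 1 - exp y / (exp y + lam) = lam / (exp y + lam) := by field_simp; ring
  rw [balakrishnanIntegrand_eq_rpow, hu, div_rpow hE.le hD.le, div_rpow hlam.le hD.le,
    rpow_neg hE.le, rpow_neg hD.le, rpow_neg hlam.le, rpow_sub_one hD.ne', rpow_sub_one hlam.ne',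
    rpow_sub hE, rpow_one]
  field_simp

lemma integral_balakrishnanIntegrand_le (hs : s ∈ Ioo (0 : ℝ) 1) (hlam : 0 < lam) {a b : ℝ}
    (hab : a ≤ b) : ∫ y in a..b, balakrishnanIntegrand s lam y ≤ π / sin (π * s) * lam ^ (-s) := by
  set u : ℝ → ℝ := fun y => exp y / (exp y + lam)
  set g : ℝ → ℝ := fun x => x ^ (-s) * (1 - x) ^ (s - 1)
  have hD : ∀ y, 0 < exp y + lam := fun y => by positivity
  have hu_mem : ∀ y, u y ∈ Ioo (0 : ℝ) 1 := fun y =>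
    ⟨div_pos (exp_pos y) (hD y), (div_lt_one (hD y)).2 (by linarith)⟩
  have hu_deriv : ∀ y, HasDerivAt u (lam * exp y / (exp y + lam) ^ 2) y := fun y =>
    ((hasDerivAt_exp y).div ((hasDerivAt_exp y).add_const lam) (hD y).ne').congr_deriv (by ring)
  have hu_mono : u a ≤ u b := by
    have := exp_le_exp.2 hab
    simp only [u]
    rw [div_le_div_iff₀ (hD a) (hD b)]
    nlinarith
  have hg_cont : ContinuousOn g (Ioo 0 1) := fun x hx =>
    ((continuousAt_id.rpow_const (Or.inl hx.1.ne')).mul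
      ((continuousAt_const.sub continuousAt_id).rpow_const
        (Or.inl (sub_pos.2 hx.2).ne'))).continuousWithinAt
  have hsubst : ∫ y in a..b, (g ∘ u) y * (lam * exp y / (exp y + lam) ^ 2) = ∫ x in u a..u b, g x :=
    integral_comp_mul_deriv' (fun y _ => hu_deriv y)
      (Continuous.div (by fun_prop) (by fun_prop) fun y => (pow_pos (hD y) 2).ne').continuousOn
      (hg_cont.mono (image_subset_iff.2 fun y _ => hu_mem y))
  have hg_nonneg : 0 ≤ᵐ[volume.restrict (Ioc 0 1)] g :=
    ae_restrict_of_forall_mem measurableSet_Ioc fun x hx =>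
      mul_nonneg (rpow_nonneg hx.1.le _) (rpow_nonneg (sub_nonneg.2 hx.2) _)
  have hg_int : IntervalIntegrable g volume 0 1 := by
    simpa [g] using intervalIntegrable_rpow_mul_one_sub_rpow (α := 1 - s) (β := s)
      (by linarith [hs.2]) hs.1
  calc ∫ y in a..b, balakrishnanIntegrand s lam y
      = lam ^ (-s) * ∫ x in u a..u b, g x := by
        rw [← hsubst, ← intervalIntegral.integral_const_mul]
        exact integral_congr fun y _ => balakrishnanIntegrand_eq_beta_substitution hlam y
    _ ≤ lam ^ (-s) * ∫ x in (0 : ℝ)..1, g x := by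
        gcongr
        exact integral_mono_interval (hu_mem a).1.le hu_mono (hu_mem b).2.le hg_nonneg hg_int
    _ = π / sin (π * s) * lam ^ (-s) := by
        rw [integral_rpow_neg_mul_one_sub_rpow hs, mul_comm]

lemma sum_balakrishnanIntegrand_le {k : ℝ} (hs : s ∈ Ioo (0 : ℝ) 1) (hk : 0 < k)
    (hlam : 0 < lam) (m n : ℤ) :
    ∑ l ∈ Finset.Icc m n, balakrishnanIntegrand s lam (k * l)
      ≤ π / sin (π * s) * lam ^ (-s) / k + 2 * lam ^ (-s) := by
  have hscale : MapsTo (fun t => k * t) (Iic (balakrishnanPeak s lam / k))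
      (Iic (balakrishnanPeak s lam)) := fun t ht => (le_div_iff₀' hk).1 ht
  have hscale' : MapsTo (fun t => k * t) (Ici (balakrishnanPeak s lam / k))
      (Ici (balakrishnanPeak s lam)) := fun t ht => (div_le_iff₀' hk).1 ht
  refine sum_Icc_int_le_of_unimodal (φ := fun t => balakrishnanIntegrand s lam (k * t))
    ((continuous_balakrishnanIntegrand hlam.le).comp (by fun_prop))
    (fun t => balakrishnanIntegrand_nonneg hlam.le _)
    ((monotoneOn_balakrishnanIntegrand hs.1 hs.2 hlam).comp
      ((monotone_mul_left_of_nonneg hk.le).monotoneOn _) hscale)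
    ((antitoneOn_balakrishnanIntegrand hs.1 hs.2 hlam).comp_MonotoneOn
      ((monotone_mul_left_of_nonneg hk.le).monotoneOn _) hscale')
    (fun t => balakrishnanIntegrand_le_rpow hs.1.le hs.2.le hlam _) (fun a b hab => ?_) m n
  rw [intervalIntegral.integral_comp_mul_left _ hk.ne', smul_eq_mul, inv_mul_eq_div]
  gcongr
  exact integral_balakrishnanIntegrand_le hs hlam (by gcongr)

end balakrishnanIntegrand

theorem sinc_quadrature_stability (s : ℝ) (hs : s ∈ Set.Ioo (0 : ℝ) 1)
    (k : ℝ) (hk : 0 < k) (M N : ℕ) (lam : ℝ) (hlam : 0 < lam) :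
    (k * Real.sin (Real.pi * s) / Real.pi) *
        ∑ l ∈ Finset.Icc (-(M : ℤ)) (N : ℤ),
          Real.exp ((1 - s) * (k * (l : ℝ))) / (Real.exp (k * (l : ℝ)) + lam)
      ≤ (1 + 2 * k * Real.sin (Real.pi * s) / Real.pi) * lam ^ (-s) := by
  have hsin : 0 < sin (π * s) :=
    sin_pos_of_pos_of_lt_pi (mul_pos pi_pos hs.1) (by nlinarith [pi_pos, hs.2])
  calc (k * sin (π * s) / π) * ∑ l ∈ Finset.Icc (-(M : ℤ)) (N : ℤ),
        balakrishnanIntegrand s lam (k * l)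
      ≤ (k * sin (π * s) / π) * (π / sin (π * s) * lam ^ (-s) / k + 2 * lam ^ (-s)) :=
        mul_le_mul_of_nonneg_left (sum_balakrishnanIntegrand_le hs hk hlam _ _)
          (div_nonneg (mul_nonneg hk.le hsin.le) pi_pos.le)
    _ = (1 + 2 * k * sin (π * s) / π) * lam ^ (-s) := by
        field_simp
end

section
/- Let s ∈ (0,1) and k > 0. For s ∈ (0,1), k > 0, and nonnegative integers 𝙼, 𝙽, define the sinc quadrature Q_k^{-s}(λ) := (k·sin(πs)/π) · ∑_{l=−𝙼}^{𝙽} e^{(1−s)kl}/(e^{kl} + λ) for λ > 0. Then for all 0 < λ ≤ Λ one has 0 ≤ Q_k^{-s}(λ) − Q_k^{-s}(Λ) ≤ ((Λ − λ)/Λ) · Q_k^{-s}(λ). -/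
/-! Each node of the quadrature contributes `a / (x + λ)` with `a, x > 0`, which is antitone in `λ`,
and `a / (x + λ) - a / (x + Λ) = (Λ - λ) / (x + Λ) · a / (x + λ) ≤ (Λ - λ) / Λ · a / (x + λ)`
because `x + Λ ≥ Λ`. Summing over the nodes and multiplying by the positive prefactor
`k sin(πs) / π` gives both inequalities. -/

open Finset Real

theorem div_add_sub_div_add_le {a x lam Lam : ℝ} (ha : 0 ≤ a) (hx : 0 ≤ x) (hlam : 0 < lam)
    (hlL : lam ≤ Lam) :
    a / (x + lam) - a / (x + Lam) ≤ (Lam - lam) / Lam * (a / (x + lam)) := by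
  have hLam : 0 < Lam := hlam.trans_le hlL
  calc a / (x + lam) - a / (x + Lam) = (Lam - lam) / (x + Lam) * (a / (x + lam)) := by
        field_simp
        ring
    _ ≤ (Lam - lam) / Lam * (a / (x + lam)) := by
        gcongr
        · linarith

theorem sum_div_add_sub_sum_div_add_bounds {ι : Type*} {t : Finset ι} {a x : ι → ℝ}
    (ha : ∀ i ∈ t, 0 ≤ a i) (hx : ∀ i ∈ t, 0 ≤ x i) {lam Lam : ℝ} (hlam : 0 < lam)
    (hlL : lam ≤ Lam) :
    0 ≤ ∑ i ∈ t, a i / (x i + lam) - ∑ i ∈ t, a i / (x i + Lam) ∧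
      ∑ i ∈ t, a i / (x i + lam) - ∑ i ∈ t, a i / (x i + Lam) ≤
        (Lam - lam) / Lam * ∑ i ∈ t, a i / (x i + lam) := by
  rw [← sum_sub_distrib, mul_sum]
  refine ⟨sum_nonneg fun i hi => sub_nonneg.2 ?_, sum_le_sum fun i hi => ?_⟩
  · exact div_le_div_of_nonneg_left (ha i hi) (by linarith [hx i hi]) (by linarith [hx i hi])
  · exact div_add_sub_div_add_le (ha i hi) (hx i hi) hlam hlL

theorem sinc_quadrature_monotone_comparison (s : ℝ) (hs : s ∈ Set.Ioo (0 : ℝ) 1)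
    (k : ℝ) (hk : 0 < k) (M N : ℕ)
    (Q : ℝ → ℝ)
    (hQ : ∀ lam : ℝ, Q lam = (k * Real.sin (Real.pi * s) / Real.pi) *
        ∑ l ∈ Finset.Icc (-(M : ℤ)) (N : ℤ),
          Real.exp ((1 - s) * (k * (l : ℝ))) / (Real.exp (k * (l : ℝ)) + lam))
    (lam Lam : ℝ) (hlam : 0 < lam) (hlL : lam ≤ Lam) :
    0 ≤ Q lam - Q Lam ∧ Q lam - Q Lam ≤ ((Lam - lam) / Lam) * Q lam := by
  have hsin : 0 < sin (π * s) :=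
    sin_pos_of_pos_of_lt_pi (mul_pos pi_pos hs.1) (mul_lt_of_lt_one_right pi_pos hs.2)
  have hC : 0 ≤ k * sin (π * s) / π := by positivity
  obtain ⟨hdiff_nonneg, hdiff_le⟩ := sum_div_add_sub_sum_div_add_bounds
    (t := Icc (-(M : ℤ)) N) (fun l _ => (exp_pos ((1 - s) * (k * l))).le)
    (fun l _ => (exp_pos (k * l)).le) hlam hlL
  rw [hQ, hQ, ← mul_sub]
  refine ⟨mul_nonneg hC hdiff_nonneg, ?_⟩
  calc _ ≤ k * sin (π * s) / π * ((Lam - lam) / Lam * ∑ l ∈ Icc (-(M : ℤ)) N,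
          exp ((1 - s) * (k * l)) / (exp (k * l) + lam)) :=
        mul_le_mul_of_nonneg_left hdiff_le hC
    _ = _ := by ring
end
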